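/- arXiv:1806.07646 — 3 statements merged into one kernel-verified Lean document; each statement's English description precedes it below -/
import Mathlib

section
/- If a probability density f on (0,∞) is continuously differentiable, positive, and satisfies Lin's condition on (0,∞) (i.e., L_f is monotone increasing on (0,∞) and L_f(x) → +∞ as x → +∞), then for every r > 0 the density f_r(x) = (1/r) x^{1/r - 1} f(x^{1/r}) of X^r also satisfies Lin's condition on (0,∞). -/
open MeasureTheory Set Filter Real

/-! The density of `X ^ r` is `g y = c y ^ (c - 1) f (y ^ c)` with `c = 1 / r`, and the chain rule
gives the identity `L_g x = (1 - c) + c L_f (x ^ c)`. Since `x ↦ x ^ c` is increasing and tends to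
`∞`, both parts of Lin's condition pass from `L_f` to `L_g`. -/

noncomputable def linFunction (f : ℝ → ℝ) (x : ℝ) : ℝ := -x * deriv f x / f x

noncomputable def rpowDensity (f : ℝ → ℝ) (c : ℝ) (y : ℝ) : ℝ := c * y ^ (c - 1) * f (y ^ c)

theorem linFunction_rpowDensity {f : ℝ → ℝ} {c x : ℝ} (hc : c ≠ 0) (hx : 0 < x)
    (hdf : DifferentiableAt ℝ f (x ^ c)) (hfx : f (x ^ c) ≠ 0) :
    linFunction (rpowDensity f c) x = (1 - c) + c * linFunction f (x ^ c) := by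
  have hpow : HasDerivAt (fun y : ℝ => y ^ c) (c * x ^ (c - 1)) x :=
    hasDerivAt_rpow_const (Or.inl hx.ne')
  have hpow' : HasDerivAt (fun y : ℝ => y ^ (c - 1)) ((c - 1) * x ^ (c - 1 - 1)) x :=
    hasDerivAt_rpow_const (Or.inl hx.ne')
  have hderiv : HasDerivAt (rpowDensity f c)
      (c * ((c - 1) * x ^ (c - 1 - 1)) * f (x ^ c)
        + c * x ^ (c - 1) * (deriv f (x ^ c) * (c * x ^ (c - 1)))) x :=
    (hpow'.const_mul c).mul (hdf.hasDerivAt.comp x hpow)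
  have hxc : x ^ c ≠ 0 := (rpow_pos_of_pos hx c).ne'
  rw [linFunction, linFunction, hderiv.deriv, rpowDensity, rpow_sub hx, rpow_sub hx, rpow_one]
  field_simp
  ring

section LinCondition

variable {f : ℝ → ℝ} {c : ℝ}

theorem eqOn_linFunction_rpowDensity (hc : c ≠ 0) (hf : DifferentiableOn ℝ f (Ioi 0))
    (hfpos : ∀ x ∈ Ioi (0 : ℝ), 0 < f x) :
    EqOn (linFunction (rpowDensity f c)) (fun x => (1 - c) + c * linFunction f (x ^ c))
      (Ioi 0) := fun x hx => by
  have hxc : x ^ c ∈ Ioi (0 : ℝ) := rpow_pos_of_pos hx c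
  exact linFunction_rpowDensity hc hx (hf.differentiableAt (isOpen_Ioi.mem_nhds hxc))
    (hfpos _ hxc).ne'

theorem monotoneOn_linFunction_rpowDensity (hc : 0 < c) (hf : DifferentiableOn ℝ f (Ioi 0))
    (hfpos : ∀ x ∈ Ioi (0 : ℝ), 0 < f x) (hmono : MonotoneOn (linFunction f) (Ioi 0)) :
    MonotoneOn (linFunction (rpowDensity f c)) (Ioi 0) := by
  refine MonotoneOn.congr ?_ (eqOn_linFunction_rpowDensity hc.ne' hf hfpos).symm
  intro x hx y hy hxy
  have hle : linFunction f (x ^ c) ≤ linFunction f (y ^ c) :=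
    hmono (rpow_pos_of_pos hx c) (rpow_pos_of_pos hy c) (rpow_le_rpow hx.le hxy hc.le)
  dsimp only
  gcongr

theorem tendsto_linFunction_rpowDensity (hc : 0 < c) (hf : DifferentiableOn ℝ f (Ioi 0))
    (hfpos : ∀ x ∈ Ioi (0 : ℝ), 0 < f x) (htop : Tendsto (linFunction f) atTop atTop) :
    Tendsto (linFunction (rpowDensity f c)) atTop atTop := by
  have hlim : Tendsto (fun x => (1 - c) + c * linFunction f (x ^ c)) atTop atTop :=
    tendsto_atTop_add_const_left _ _
      ((htop.comp (tendsto_rpow_atTop hc)).const_mul_atTop hc)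
  refine hlim.congr' ?_
  filter_upwards [eventually_gt_atTop (0 : ℝ)] with x hx
  exact (eqOn_linFunction_rpowDensity hc.ne' hf hfpos hx).symm

end LinCondition

theorem stmt1_general (f : ℝ → ℝ)
    (hf : ContDiffOn ℝ 1 f (Set.Ioi 0))
    (hfpos : ∀ x ∈ Set.Ioi (0 : ℝ), 0 < f x)
    (hLmono : MonotoneOn (fun x => -x * deriv f x / f x) (Set.Ioi 0))
    (hLtop : Tendsto (fun x => -x * deriv f x / f x) atTop atTop)
    (r : ℝ) (hr : 0 < r) :
    MonotoneOn
        (fun x => -x * deriv (fun y : ℝ => (1 / r) * y ^ (1 / r - 1) * f (y ^ (1 / r))) x /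
          ((1 / r) * x ^ (1 / r - 1) * f (x ^ (1 / r)))) (Set.Ioi 0) ∧
      Tendsto
        (fun x => -x * deriv (fun y : ℝ => (1 / r) * y ^ (1 / r - 1) * f (y ^ (1 / r))) x /
          ((1 / r) * x ^ (1 / r - 1) * f (x ^ (1 / r)))) atTop atTop := by
  have hc : 0 < 1 / r := one_div_pos.mpr hr
  have hdf : DifferentiableOn ℝ f (Ioi 0) := hf.differentiableOn one_ne_zero
  exact ⟨monotoneOn_linFunction_rpowDensity hc hdf hfpos hLmono,
    tendsto_linFunction_rpowDensity hc hdf hfpos hLtop⟩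

/-- If a probability density `f` on `(0,∞)` is continuously differentiable,
positive, and satisfies Lin's condition on `(0,∞)`, then for every `r > 0` the density
`f_r x = (1/r) x^(1/r - 1) f (x^(1/r))` of `X^r` also satisfies Lin's condition on `(0,∞)`. -/
theorem stmt1 (f : ℝ → ℝ)
    (hf : ContDiffOn ℝ 1 f (Set.Ioi 0))
    (hfpos : ∀ x ∈ Set.Ioi (0 : ℝ), 0 < f x)
    (hfzero : ∀ x ≤ (0 : ℝ), f x = 0)
    (hfint : ∫ x, f x = 1)
    (hLmono : MonotoneOn (fun x => -x * deriv f x / f x) (Set.Ioi 0))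
    (hLtop : Tendsto (fun x => -x * deriv f x / f x) atTop atTop)
    (r : ℝ) (hr : 0 < r) :
    MonotoneOn
        (fun x => -x * deriv (fun y : ℝ => (1 / r) * y ^ (1 / r - 1) * f (y ^ (1 / r))) x /
          ((1 / r) * x ^ (1 / r - 1) * f (x ^ (1 / r)))) (Set.Ioi 0) ∧
      Tendsto
        (fun x => -x * deriv (fun y : ℝ => (1 / r) * y ^ (1 / r - 1) * f (y ^ (1 / r))) x /
          ((1 / r) * x ^ (1 / r - 1) * f (x ^ (1 / r)))) atTop atTop :=
  stmt1_general f hf hfpos hLmono hLtop r hr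
end

section
/- Let f₁, f₂ be continuous probability densities positive on (0,∞) and vanishing elsewhere, with quantile points u_{m,j} for f₁ and v_{m,j} for f₂ (defined by ∫_{u_{m,j}}^{u_{m,j+1}} f₁ = 2^{-m} and analogously for v). For each m, let K_m = ⋃_{j=0}^{2^m−1} (u_{m,j}, u_{m,j+1}) × (v_{m,j}, v_{m,j+1}) and define f_m(x₁,x₂) = 2^m f₁(x₁) f₂(x₂) on K_m and 0 elsewhere. Then f_m is a probability density on ℝ², and its marginal densities are f₁ and f₂: ∫_ℝ f_m(x₁, x₂) dx₂ = f₁(x₁) for almost every x₁, and ∫_ℝ f_m(x₁, x₂) dx₁ = f₂(x₂) for almost every x₂. -/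
open MeasureTheory Set Filter Real Classical

/-- The `j`-th quantile interval at level `m`: `(u j, u (j+1))`, except the last one,
which is `(u (2^m - 1), +∞)`. -/
def quantInterval (u : ℕ → ℝ) (m j : ℕ) : Set ℝ :=
  if j + 1 = 2 ^ m then Set.Ioi (u j) else Set.Ioo (u j) (u (j + 1))

/-!
The quantile intervals `Iᵤ j` of level `m` are disjoint and cover `(0, ∞)` up to the finitely
many quantile points, so for almost every `x₁` there is at most one block `Iᵤ j × Iᵥ j` of `K`
above `x₁`: either `x₁ ∈ Iᵤ j` and the section integral is `2^m f₁(x₁) ∫_{Iᵥ j} f₂ = f₁(x₁)`,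
or `x₁ ≤ 0` and both sides vanish. The second marginal follows by exchanging the coordinates,
and the total mass is `∫ f₁ = 1` by Fubini.
-/

lemma nonneg_of_pos_of_eq_zero {f : ℝ → ℝ} (hpos : ∀ x ∈ Ioi (0 : ℝ), 0 < f x)
    (hzero : ∀ x ≤ 0, f x = 0) : 0 ≤ f := fun x =>
  (le_or_gt x 0).elim (fun h => (hzero x h).ge) fun h => (hpos x h).le

section QuantInterval

variable {u : ℕ → ℝ} {m j : ℕ}

lemma measurableSet_quantInterval (u : ℕ → ℝ) (m j : ℕ) :
    MeasurableSet (quantInterval u m j) := by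
  unfold quantInterval
  split_ifs
  exacts [measurableSet_Ioi, measurableSet_Ioo]

lemma quantInterval_subset_Ioi (u : ℕ → ℝ) (m j : ℕ) : quantInterval u m j ⊆ Ioi (u j) := by
  unfold quantInterval
  split_ifs
  exacts [subset_rfl, Ioo_subset_Ioi_self]

lemma quantInterval_subset_Iio (hj : j + 1 ≠ 2 ^ m) :
    quantInterval u m j ⊆ Iio (u (j + 1)) := by
  rw [quantInterval, if_neg hj]
  exact Ioo_subset_Iio_self

lemma exists_mem_quantInterval {x : ℝ} (hx : u 0 < x) (hxu : ∀ j < 2 ^ m, x ≠ u j) :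
    ∃ j < 2 ^ m, x ∈ quantInterval u m j := by
  have hm : 0 < 2 ^ m := Nat.two_pow_pos m
  set j := Nat.findGreatest (fun i => u i < x) (2 ^ m - 1)
  have hjx : u j < x := Nat.findGreatest_spec (P := fun i => u i < x) (m := 0) (Nat.zero_le _) hx
  have hj : j < 2 ^ m := by have := Nat.findGreatest_le (P := fun i => u i < x) (2 ^ m - 1); omega
  refine ⟨j, hj, ?_⟩
  unfold quantInterval
  split_ifs with hlast
  · exact hjx
  · have hxj : ¬u (j + 1) < x := Nat.findGreatest_is_greatest (Nat.lt_succ_self j) (by omega)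
    exact ⟨hjx, (not_lt.1 hxj).lt_of_ne (hxu _ (by omega))⟩

variable (humono : ∀ j, j + 1 < 2 ^ m → u j < u (j + 1))
include humono

lemma strictMonoOn_Iio_of_lt_succ : StrictMonoOn u (Iio (2 ^ m)) :=
  (strictMonoOn_Iic_of_lt_succ (n := 2 ^ m - 1) fun k hk => humono k (by omega)).mono
    fun _ hk => Nat.le_sub_one_of_lt hk

lemma disjoint_quantInterval {i : ℕ} (hij : i < j) (hj : j < 2 ^ m) :
    Disjoint (quantInterval u m i) (quantInterval u m j) := by
  have hle : u (i + 1) ≤ u j :=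
    (strictMonoOn_Iio_of_lt_succ humono).monotoneOn (by simp only [mem_Iio]; omega) hj hij
  refine disjoint_of_subset (quantInterval_subset_Iio (by omega))
    (quantInterval_subset_Ioi u m j) ?_
  exact disjoint_left.2 fun x hx hx' => (mem_Iio.1 hx).not_gt (hle.trans_lt hx')

lemma pairwiseDisjoint_quantInterval :
    (Finset.range (2 ^ m) : Set ℕ).PairwiseDisjoint (quantInterval u m) := by
  intro i hi j hj hij
  simp only [Finset.coe_range, mem_Iio] at hi hj
  rcases hij.lt_or_gt with h | h
  · exact disjoint_quantInterval humono h hj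
  · exact (disjoint_quantInterval humono h hi).symm

end QuantInterval

section Blocks

variable {α β : Type*} {A : ℕ → Set α} {B : ℕ → Set β} {s : Finset ℕ} {x : α}

lemma mem_biUnion_prod_iff_of_mem (hA : (s : Set ℕ).PairwiseDisjoint A) {j : ℕ} (hj : j ∈ s)
    (hx : x ∈ A j) (y : β) : (x, y) ∈ ⋃ i ∈ s, A i ×ˢ B i ↔ y ∈ B j := by
  simp only [mem_iUnion, mem_prod, exists_prop]
  constructor
  · rintro ⟨i, hi, hxi, hy⟩
    obtain rfl : i = j := hA.elim hi hj (not_disjoint_iff.2 ⟨x, hxi, hx⟩)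
    exact hy
  · exact fun hy => ⟨j, hj, hx, hy⟩

lemma notMem_biUnion_prod (hx : ∀ i ∈ s, x ∉ A i) (y : β) : (x, y) ∉ ⋃ i ∈ s, A i ×ˢ B i := by
  simp only [mem_iUnion, mem_prod, exists_prop, not_exists, not_and]
  exact fun i hi hxi => absurd hxi (hx i hi)

end Blocks

/-- The density `f_m` of the statement, for marginal densities `f`, `g` and quantile points
`u`, `v`. -/
noncomputable def blockDensity (f g : ℝ → ℝ) (u v : ℕ → ℝ) (m : ℕ) : ℝ × ℝ → ℝ :=
  (⋃ j ∈ Finset.range (2 ^ m), quantInterval u m j ×ˢ quantInterval v m j).indicator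
    fun p => 2 ^ m * f p.1 * g p.2

section BlockDensity

variable {f g : ℝ → ℝ} {u v : ℕ → ℝ} {m : ℕ}

lemma measurableSet_blockSet (u v : ℕ → ℝ) (m : ℕ) :
    MeasurableSet (⋃ j ∈ Finset.range (2 ^ m), quantInterval u m j ×ˢ quantInterval v m j) :=
  Finset.measurableSet_biUnion _ fun j _ =>
    (measurableSet_quantInterval u m j).prod (measurableSet_quantInterval v m j)

lemma blockDensity_nonneg (hf : 0 ≤ f) (hg : 0 ≤ g) (p : ℝ × ℝ) :
    0 ≤ blockDensity f g u v m p :=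
  indicator_nonneg (fun p _ => mul_nonneg (mul_nonneg (by positivity) (hf p.1)) (hg p.2)) p

lemma blockDensity_swap (x y : ℝ) :
    blockDensity f g u v m (x, y) = blockDensity g f v u m (y, x) := by
  simp only [blockDensity, indicator_apply, mem_iUnion, mem_prod, exists_prop, and_comm]
  split_ifs <;> ring

lemma integrable_blockDensity (hf : Integrable f) (hg : Integrable g) :
    Integrable (blockDensity f g u v m) := by
  rw [Measure.volume_eq_prod]
  exact (((hf.const_mul (2 ^ m)).mul_prod hg).indicator (measurableSet_blockSet u v m))

lemma integral_blockDensity_of_mem (humono : ∀ j, j + 1 < 2 ^ m → u j < u (j + 1)) {j : ℕ}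
    (hj : j < 2 ^ m) {x : ℝ} (hx : x ∈ quantInterval u m j) :
    ∫ y, blockDensity f g u v m (x, y) = 2 ^ m * f x * ∫ y in quantInterval v m j, g y := by
  have hsection : ∀ y, blockDensity f g u v m (x, y)
      = (quantInterval v m j).indicator (fun y => 2 ^ m * f x * g y) y := fun y => by
    simp only [blockDensity, indicator_apply, mem_biUnion_prod_iff_of_mem
      (pairwiseDisjoint_quantInterval humono) (Finset.mem_range.2 hj) hx]
  simp only [hsection]
  rw [integral_indicator (measurableSet_quantInterval v m j), integral_const_mul]

lemma ae_integral_blockDensity_eq (hf0 : ∀ x ≤ 0, f x = 0) (hu0 : u 0 = 0)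
    (humono : ∀ j, j + 1 < 2 ^ m → u j < u (j + 1))
    (hvint : ∀ j < 2 ^ m, ∫ x in quantInterval v m j, g x = 1 / 2 ^ m) :
    ∀ᵐ x, ∫ y, blockDensity f g u v m (x, y) = f x := by
  filter_upwards [((finite_Iio (2 ^ m)).image u).countable.ae_notMem volume] with x hxu
  by_cases hx : ∃ j < 2 ^ m, x ∈ quantInterval u m j
  · obtain ⟨j, hj, hxj⟩ := hx
    rw [integral_blockDensity_of_mem humono hj hxj, hvint j hj]
    field_simp
  · have hxnonpos : x ≤ 0 := by
      by_contra! hpos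
      exact hx (exists_mem_quantInterval (hu0 ▸ hpos)
        fun j hj hxj => hxu ⟨j, hj, hxj.symm⟩)
    have hzero : ∀ y, blockDensity f g u v m (x, y) = 0 := fun y =>
      indicator_of_notMem (notMem_biUnion_prod
        (fun j hj hxj => hx ⟨j, Finset.mem_range.1 hj, hxj⟩) y) _
    simp only [hzero, integral_zero, hf0 x hxnonpos]

end BlockDensity

theorem stmt3_general (f₁ f₂ : ℝ → ℝ)
    (hf₁pos : ∀ x ∈ Set.Ioi (0 : ℝ), 0 < f₁ x) (hf₂pos : ∀ x ∈ Set.Ioi (0 : ℝ), 0 < f₂ x)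
    (hf₁zero : ∀ x ≤ (0 : ℝ), f₁ x = 0) (hf₂zero : ∀ x ≤ (0 : ℝ), f₂ x = 0)
    (hf₁int : ∫ x, f₁ x = 1) (hf₂int : ∫ x, f₂ x = 1)
    (m : ℕ) (u v : ℕ → ℝ)
    (hu0 : u 0 = 0) (hv0 : v 0 = 0)
    (humono : ∀ j, j + 1 < 2 ^ m → u j < u (j + 1))
    (hvmono : ∀ j, j + 1 < 2 ^ m → v j < v (j + 1))
    (huint : ∀ j < 2 ^ m, ∫ x in quantInterval u m j, f₁ x = (1 : ℝ) / 2 ^ m)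
    (hvint : ∀ j < 2 ^ m, ∫ x in quantInterval v m j, f₂ x = (1 : ℝ) / 2 ^ m)
    (K : Set (ℝ × ℝ))
    (hK : K = ⋃ j ∈ Finset.range (2 ^ m), (quantInterval u m j) ×ˢ (quantInterval v m j))
    (fm : ℝ × ℝ → ℝ)
    (hfm : ∀ p, fm p = if p ∈ K then 2 ^ m * f₁ p.1 * f₂ p.2 else 0) :
    (∀ p, 0 ≤ fm p) ∧
    (∫ p : ℝ × ℝ, fm p = 1) ∧
    (∀ᵐ x₁ : ℝ, ∫ x₂ : ℝ, fm (x₁, x₂) = f₁ x₁) ∧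
    (∀ᵐ x₂ : ℝ, ∫ x₁ : ℝ, fm (x₁, x₂) = f₂ x₂) := by
  obtain rfl : fm = blockDensity f₁ f₂ u v m := funext fun p => by
    rw [hfm, hK, blockDensity, indicator_apply]
  have hmarg₁ := ae_integral_blockDensity_eq hf₁zero hu0 humono hvint
  have hmarg₂ : ∀ᵐ y, ∫ x, blockDensity f₁ f₂ u v m (x, y) = f₂ y := by
    simpa only [← blockDensity_swap] using ae_integral_blockDensity_eq hf₂zero hv0 hvmono huint
  refine ⟨blockDensity_nonneg (nonneg_of_pos_of_eq_zero hf₁pos hf₁zero)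
    (nonneg_of_pos_of_eq_zero hf₂pos hf₂zero), ?_, hmarg₁, hmarg₂⟩
  have hint := integrable_blockDensity (u := u) (v := v) (m := m)
    (.of_integral_ne_zero (hf₁int ▸ one_ne_zero)) (.of_integral_ne_zero (hf₂int ▸ one_ne_zero))
  rw [Measure.volume_eq_prod] at hint ⊢
  rw [integral_prod _ hint, integral_congr_ae hmarg₁, hf₁int]

/-- With `K_m = ⋃_{j<2^m} (u_{m,j},u_{m,j+1}) × (v_{m,j},v_{m,j+1})` and
`f_m = 2^m f₁(x₁) f₂(x₂)` on `K_m`, `0` elsewhere, the function `f_m` is a probability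
density on `ℝ²` whose marginals are `f₁` and `f₂` (a.e.). -/
theorem stmt3 (f₁ f₂ : ℝ → ℝ)
    (hf₁c : Continuous f₁) (hf₂c : Continuous f₂)
    (hf₁pos : ∀ x ∈ Set.Ioi (0 : ℝ), 0 < f₁ x) (hf₂pos : ∀ x ∈ Set.Ioi (0 : ℝ), 0 < f₂ x)
    (hf₁zero : ∀ x ≤ (0 : ℝ), f₁ x = 0) (hf₂zero : ∀ x ≤ (0 : ℝ), f₂ x = 0)
    (hf₁int : ∫ x, f₁ x = 1) (hf₂int : ∫ x, f₂ x = 1)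
    (m : ℕ) (u v : ℕ → ℝ)
    (hu0 : u 0 = 0) (hv0 : v 0 = 0)
    (humono : ∀ j, j + 1 < 2 ^ m → u j < u (j + 1))
    (hvmono : ∀ j, j + 1 < 2 ^ m → v j < v (j + 1))
    (huint : ∀ j < 2 ^ m, ∫ x in quantInterval u m j, f₁ x = (1 : ℝ) / 2 ^ m)
    (hvint : ∀ j < 2 ^ m, ∫ x in quantInterval v m j, f₂ x = (1 : ℝ) / 2 ^ m)
    (K : Set (ℝ × ℝ))
    (hK : K = ⋃ j ∈ Finset.range (2 ^ m), (quantInterval u m j) ×ˢ (quantInterval v m j))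
    (fm : ℝ × ℝ → ℝ)
    (hfm : ∀ p, fm p = if p ∈ K then 2 ^ m * f₁ p.1 * f₂ p.2 else 0) :
    (∀ p, 0 ≤ fm p) ∧
    (∫ p : ℝ × ℝ, fm p = 1) ∧
    (∀ᵐ x₁ : ℝ, ∫ x₂ : ℝ, fm (x₁, x₂) = f₁ x₁) ∧
    (∀ᵐ x₂ : ℝ, ∫ x₁ : ℝ, fm (x₁, x₂) = f₂ x₂) :=
  stmt3_general f₁ f₂ hf₁pos hf₂pos hf₁zero hf₂zero hf₁int hf₂int m u v hu0 hv0 humono hvmono huint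
    hvint K hK fm hfm
end

section
/- Let f₁, f₂ be continuous probability densities positive on (0,∞) and vanishing elsewhere, with quantile points u_{m,j}, v_{m,j} as above, and K_m = ⋃_{j=0}^{2^m−1} [u_{m,j}, u_{m,j+1}] × [v_{m,j}, v_{m,j+1}]. Then the sets K_m are nested (K_{m+1} ⊆ K_m up to boundary points) and the intersection K = ⋂_{m≥1} K_m has two-dimensional Lebesgue measure zero. -/
open MeasureTheory Set Filter Real

/-- The closed `j`-th quantile interval at level `m`: `[u j, u (j+1)]`, except the
last one, which is `[u (2^m - 1), +∞)`. -/
def quantIntervalC (u : ℕ → ℝ) (m j : ℕ) : Set ℝ :=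
  if j + 1 = 2 ^ m then Set.Ici (u j) else Set.Icc (u j) (u (j + 1))

/-!
Each box of level `m + 1` lies in the box of level `m` with half its index, so the `K_m` are
nested. If `p, r ∈ K` with `p.1 < r.1`, choose `m` with `2⁻ᵐ < ∫_{p.1}^{r.1} f₁`; since each first
side carries mass exactly `2⁻ᵐ`, `p` and `r` lie in different boxes of level `m`, `p` in the
earlier one, whence `p.2 ≤ r.2`. So `K` is a monotone set: only countably many of its vertical
sections have more than one point, and Fubini gives measure zero.
-/

section MonotoneSet

variable {α β : Type*} [LinearOrder α] [LinearOrder β]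

def IsMonotoneSet (S : Set (α × β)) : Prop :=
  ∀ p ∈ S, ∀ q ∈ S, p.1 < q.1 → p.2 ≤ q.2

theorem IsMonotoneSet.countable_setOf_nontrivial_section [TopologicalSpace β] [OrderTopology β]
    [DenselyOrdered β] [TopologicalSpace.SeparableSpace β] {S : Set (α × β)}
    (hS : IsMonotoneSet S) : {x | (Prod.mk x ⁻¹' S).Nontrivial}.Countable := by
  let I : α → Set β := fun x => ⋃ a ∈ Prod.mk x ⁻¹' S, ⋃ b ∈ Prod.mk x ⁻¹' S, Ioo a b
  have hdisj : Pairwise (Function.onFun Disjoint I) := (pairwise_disjoint_on I).2 fun x y hxy => by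
    simp only [I, disjoint_left, mem_iUnion, mem_Ioo, mem_preimage, exists_prop, not_exists,
      not_and]
    rintro z ⟨-, -, b, hb, -, hzb⟩ a' ha' b' - ha'z -
    exact lt_irrefl z (hzb.trans_le (hS _ hb _ ha' hxy) |>.trans ha'z)
  refine PairwiseDisjoint.countable_of_isOpen (s := I) (hdisj.set_pairwise _)
    (fun _ _ => isOpen_biUnion fun _ _ => isOpen_biUnion fun _ _ => isOpen_Ioo) fun x hx => ?_
  obtain ⟨a, ha, b, hb, hab⟩ := hx.exists_lt
  obtain ⟨z, hz⟩ := nonempty_Ioo.2 hab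
  exact ⟨z, mem_biUnion ha (mem_biUnion hb hz)⟩

theorem IsMonotoneSet.measure_prod_eq_zero [MeasurableSpace α] [MeasurableSpace β]
    [TopologicalSpace β] [OrderTopology β] [DenselyOrdered β] [TopologicalSpace.SeparableSpace β]
    {S : Set (α × β)} (hS : IsMonotoneSet S) (hSm : MeasurableSet S)
    (μ : Measure α) (ν : Measure β) [NullSingletonClass μ] [NullSingletonClass ν] [SFinite ν] :
    μ.prod ν S = 0 := by
  rw [Measure.prod_apply hSm, lintegral_congr_ae (g := fun _ => 0), lintegral_zero]
  filter_upwards [hS.countable_setOf_nontrivial_section.ae_notMem μ] with x hx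
  exact (not_nontrivial_iff.1 hx).measure_zero ν

end MonotoneSet

theorem intervalIntegral_le_setIntegral_of_ordConnected {f : ℝ → ℝ} {s : Set ℝ}
    (hf : IntegrableOn f s) (hf0 : ∀ x ∈ s, 0 ≤ f x) (hs : s.OrdConnected) {x y : ℝ}
    (hx : x ∈ s) (hy : y ∈ s) (hxy : x ≤ y) : ∫ t in x..y, f t ≤ ∫ t in s, f t := by
  rw [intervalIntegral.integral_of_le hxy]
  exact setIntegral_mono_set hf ((ae_restrict_iff' hs.measurableSet).2 (Eventually.of_forall hf0))
    (Ioc_subset_Icc_self.trans (hs.out hx hy)).eventuallyLE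

section QuantileIntervals

variable {u v : ℕ → ℝ} {m i j : ℕ} {x y : ℝ}

theorem le_of_mem_quantIntervalC (hx : x ∈ quantIntervalC u m j) : u j ≤ x := by
  unfold quantIntervalC at hx
  split at hx
  exacts [hx, hx.1]

theorem le_of_mem_quantIntervalC_of_ne (hj : j + 1 ≠ 2 ^ m) (hx : x ∈ quantIntervalC u m j) :
    x ≤ u (j + 1) := by
  unfold quantIntervalC at hx
  rw [if_neg hj] at hx
  exact hx.2

theorem ordConnected_quantIntervalC : (quantIntervalC u m j).OrdConnected := by
  unfold quantIntervalC
  split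
  exacts [ordConnected_Ici, ordConnected_Icc]

theorem isClosed_quantIntervalC : IsClosed (quantIntervalC u m j) := by
  unfold quantIntervalC
  split
  exacts [isClosed_Ici, isClosed_Icc]

theorem quantIntervalC_succ_subset {u' : ℕ → ℝ} (hu' : MonotoneOn u' (Iio (2 ^ (m + 1))))
    (href : ∀ j < 2 ^ m, u' (2 * j) = u j) (hj : j < 2 ^ (m + 1)) :
    quantIntervalC u' (m + 1) j ⊆ quantIntervalC u m (j / 2) := by
  have hpow : 2 ^ (m + 1) = 2 * 2 ^ m := by ring
  have hlow : u (j / 2) ≤ u' j := by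
    rw [← href _ (by omega)]
    exact hu' (mem_Iio.2 (by omega)) hj (by omega)
  intro x hx
  unfold quantIntervalC
  split_ifs with hlast
  · exact hlow.trans (le_of_mem_quantIntervalC hx)
  · have hup : u' (j + 1) ≤ u (j / 2 + 1) := by
      rw [← href _ (by omega)]
      exact hu' (mem_Iio.2 (by omega)) (mem_Iio.2 (by omega)) (by omega)
    exact ⟨hlow.trans (le_of_mem_quantIntervalC hx),
      (le_of_mem_quantIntervalC_of_ne (by omega) hx).trans hup⟩

theorem le_of_mem_quantIntervalC_of_lt (hu : MonotoneOn u (Iio (2 ^ m))) (hij : i < j)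
    (hj : j < 2 ^ m) (hx : x ∈ quantIntervalC u m i) (hy : y ∈ quantIntervalC u m j) : x ≤ y :=
  calc x ≤ u (i + 1) := le_of_mem_quantIntervalC_of_ne (by omega) hx
    _ ≤ u j := hu (mem_Iio.2 (by omega)) hj hij
    _ ≤ y := le_of_mem_quantIntervalC hy

def quantBoxes (u v : ℕ → ℝ) (m : ℕ) : Set (ℝ × ℝ) :=
  ⋃ j ∈ Finset.range (2 ^ m), quantIntervalC u m j ×ˢ quantIntervalC v m j

theorem mem_quantBoxes {p : ℝ × ℝ} :
    p ∈ quantBoxes u v m ↔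
      ∃ j < 2 ^ m, p.1 ∈ quantIntervalC u m j ∧ p.2 ∈ quantIntervalC v m j := by
  simp only [quantBoxes, mem_iUnion, Finset.mem_range, mem_prod, exists_prop]

theorem isClosed_quantBoxes : IsClosed (quantBoxes u v m) :=
  isClosed_biUnion_finset fun _ _ => isClosed_quantIntervalC.prod isClosed_quantIntervalC

theorem quantBoxes_succ_subset {u' v' : ℕ → ℝ} (hu' : MonotoneOn u' (Iio (2 ^ (m + 1))))
    (hv' : MonotoneOn v' (Iio (2 ^ (m + 1)))) (huref : ∀ j < 2 ^ m, u' (2 * j) = u j)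
    (hvref : ∀ j < 2 ^ m, v' (2 * j) = v j) : quantBoxes u' v' (m + 1) ⊆ quantBoxes u v m := by
  intro p hp
  obtain ⟨j, hj, hpu, hpv⟩ := mem_quantBoxes.1 hp
  exact mem_quantBoxes.2 ⟨j / 2, by omega, quantIntervalC_succ_subset hu' huref hj hpu,
    quantIntervalC_succ_subset hv' hvref hj hpv⟩

theorem snd_le_snd_of_mem_quantBoxes {f : ℝ → ℝ} (hf : Integrable f) (hf0 : 0 ≤ f)
    (hu : MonotoneOn u (Iio (2 ^ m))) (hv : MonotoneOn v (Iio (2 ^ m)))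
    (hmass : ∀ j < 2 ^ m, ∫ x in quantIntervalC u m j, f x = 1 / 2 ^ m) {p r : ℝ × ℝ}
    (hp : p ∈ quantBoxes u v m) (hr : r ∈ quantBoxes u v m) (hpr : p.1 < r.1)
    (hmass_pr : 1 / 2 ^ m < ∫ x in p.1..r.1, f x) : p.2 ≤ r.2 := by
  obtain ⟨i, hi, hpu, hpv⟩ := mem_quantBoxes.1 hp
  obtain ⟨j, hj, hru, hrv⟩ := mem_quantBoxes.1 hr
  have hij : i ≤ j := not_lt.1 fun hji =>
    (le_of_mem_quantIntervalC_of_lt hu hji hi hru hpu).not_gt hpr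
  have hne : i ≠ j := by
    rintro rfl
    have := intervalIntegral_le_setIntegral_of_ordConnected hf.integrableOn (fun x _ => hf0 x)
      ordConnected_quantIntervalC hpu hru hpr.le
    linarith [hmass i hi]
  exact le_of_mem_quantIntervalC_of_lt hv (lt_of_le_of_ne hij hne) hj hpv hrv

end QuantileIntervals

theorem isMonotoneSet_iInter_quantBoxes {f : ℝ → ℝ} (hf : Integrable f) (hf0 : 0 ≤ f)
    (hfpos : ∀ x ∈ Ioi 0, 0 < f x) {u v : ℕ → ℕ → ℝ} (hu0 : u 0 0 = 0)
    (hu : ∀ m, MonotoneOn (u m) (Iio (2 ^ m))) (hv : ∀ m, MonotoneOn (v m) (Iio (2 ^ m)))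
    (hmass : ∀ m, ∀ j < 2 ^ m, ∫ x in quantIntervalC (u m) m j, f x = 1 / 2 ^ m) :
    IsMonotoneSet (⋂ m, quantBoxes (u m) (v m) m) := by
  intro p hp r hr hpr
  simp only [mem_iInter] at hp hr
  have hp0 : 0 ≤ p.1 := by
    obtain ⟨j, hj, hpu, -⟩ := mem_quantBoxes.1 (hp 0)
    obtain rfl : j = 0 := by simpa using hj
    simpa [hu0] using le_of_mem_quantIntervalC hpu
  have hpos : 0 < ∫ x in p.1..r.1, f x := intervalIntegral.intervalIntegral_pos_of_pos_on
    hf.intervalIntegrable (fun x hx => hfpos x (hp0.trans_lt hx.1)) hpr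
  obtain ⟨m, hm⟩ := exists_pow_lt_of_lt_one hpos (by norm_num : (1 : ℝ) / 2 < 1)
  exact snd_le_snd_of_mem_quantBoxes hf hf0 (hu m) (hv m) (hmass m) (hp m) (hr m) hpr
    (by simpa [div_pow] using hm)

theorem stmt4_general (f₁ : ℝ → ℝ)
    (hf₁pos : ∀ x ∈ Set.Ioi (0 : ℝ), 0 < f₁ x)
    (hf₁zero : ∀ x ≤ (0 : ℝ), f₁ x = 0)
    (hf₁int : ∫ x, f₁ x = 1)
    (u v : ℕ → ℕ → ℝ)
    (hu0 : ∀ m, u m 0 = 0)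
    (huint : ∀ m, ∀ j < 2 ^ m, ∫ x in quantIntervalC (u m) m j, f₁ x = (1 : ℝ) / 2 ^ m)
    (humono : ∀ m, ∀ j, j + 1 < 2 ^ m → u m j < u m (j + 1))
    (hvmono : ∀ m, ∀ j, j + 1 < 2 ^ m → v m j < v m (j + 1))
    (huref : ∀ m, ∀ j < 2 ^ m, u (m + 1) (2 * j) = u m j)
    (hvref : ∀ m, ∀ j < 2 ^ m, v (m + 1) (2 * j) = v m j)
    (K : ℕ → Set (ℝ × ℝ))
    (hK : ∀ m, K m = ⋃ j ∈ Finset.range (2 ^ m),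
      (quantIntervalC (u m) m j) ×ˢ (quantIntervalC (v m) m j)) :
    (∀ m, K (m + 1) ⊆ K m) ∧ (volume : Measure (ℝ × ℝ)) (⋂ m, K m) = 0 := by
  have hf₁ : Integrable f₁ := .of_integral_ne_zero (by rw [hf₁int]; exact one_ne_zero)
  have hf₁0 : 0 ≤ f₁ := fun x =>
    (le_or_gt x 0).elim (fun h => (hf₁zero x h).ge) fun h => (hf₁pos x h).le
  have hu m : MonotoneOn (u m) (Iio (2 ^ m)) :=
    monotoneOn_of_le_add_one ordConnected_Iio fun j _ _ hj => (humono m j hj).le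
  have hv m : MonotoneOn (v m) (Iio (2 ^ m)) :=
    monotoneOn_of_le_add_one ordConnected_Iio fun j _ _ hj => (hvmono m j hj).le
  obtain rfl : K = fun m => quantBoxes (u m) (v m) m := funext hK
  refine ⟨fun m => quantBoxes_succ_subset (hu (m + 1)) (hv (m + 1)) (huref m) (hvref m), ?_⟩
  rw [Measure.volume_eq_prod]
  exact (isMonotoneSet_iInter_quantBoxes hf₁ hf₁0 hf₁pos (hu0 0) hu hv huint).measure_prod_eq_zero
    (isClosed_iInter fun _ => isClosed_quantBoxes).measurableSet _ _

/-- With `K_m = ⋃_{j<2^m} [u_{m,j},u_{m,j+1}] × [v_{m,j},v_{m,j+1}]`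
built from the dyadic quantile points of `f₁` and `f₂`, the sets `K_m` are nested
and their intersection has two-dimensional Lebesgue measure zero. -/
theorem stmt4 (f₁ f₂ : ℝ → ℝ)
    (hf₁c : Continuous f₁) (hf₂c : Continuous f₂)
    (hf₁pos : ∀ x ∈ Set.Ioi (0 : ℝ), 0 < f₁ x) (hf₂pos : ∀ x ∈ Set.Ioi (0 : ℝ), 0 < f₂ x)
    (hf₁zero : ∀ x ≤ (0 : ℝ), f₁ x = 0) (hf₂zero : ∀ x ≤ (0 : ℝ), f₂ x = 0)
    (hf₁int : ∫ x, f₁ x = 1) (hf₂int : ∫ x, f₂ x = 1)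
    (u v : ℕ → ℕ → ℝ)
    (hu0 : ∀ m, u m 0 = 0) (hv0 : ∀ m, v m 0 = 0)
    (huint : ∀ m, ∀ j < 2 ^ m, ∫ x in quantIntervalC (u m) m j, f₁ x = (1 : ℝ) / 2 ^ m)
    (hvint : ∀ m, ∀ j < 2 ^ m, ∫ x in quantIntervalC (v m) m j, f₂ x = (1 : ℝ) / 2 ^ m)
    (humono : ∀ m, ∀ j, j + 1 < 2 ^ m → u m j < u m (j + 1))
    (hvmono : ∀ m, ∀ j, j + 1 < 2 ^ m → v m j < v m (j + 1))
    (huref : ∀ m, ∀ j < 2 ^ m, u (m + 1) (2 * j) = u m j)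
    (hvref : ∀ m, ∀ j < 2 ^ m, v (m + 1) (2 * j) = v m j)
    (K : ℕ → Set (ℝ × ℝ))
    (hK : ∀ m, K m = ⋃ j ∈ Finset.range (2 ^ m),
      (quantIntervalC (u m) m j) ×ˢ (quantIntervalC (v m) m j)) :
    (∀ m, K (m + 1) ⊆ K m) ∧ (volume : Measure (ℝ × ℝ)) (⋂ m, K m) = 0 :=
  stmt4_general f₁ hf₁pos hf₁zero hf₁int u v hu0 huint humono hvmono huref hvref K hK
end
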